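/- Under the hypotheses of the uncertainty relation (states |α_θ⟩, |α_ω⟩ formed as superpositions cos(θ/2)|α₀⟩ + e^{iφ}sin(θ/2)|α₁⟩ and cos(ω/2)|α₀⟩ + e^{iφ'}sin(ω/2)|α₁⟩ of unit vectors |α₀⟩, |α₁⟩ in A⊗B), the equiprobable guessing probabilities satisfy p_g(α_θ^{B}, α_ω^{B}) ≤ (1/2)[|z₁|·√(1 − (2p_g(α₀^A, α₁^A) − 1)²) + |z₂|·(2p_g(α₀^B, α₁^B) − 1) + 1], where z₁ = (sinθ·e^{−iφ} − sinω·e^{−iφ'})/2 and z₂ = (cosθ − cosω)/2. -/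

import Mathlib

open Matrix Kronecker
open scoped ComplexOrder
noncomputable section

open scoped Classical MatrixOrder in
/-- total matrix square root: the PSD square root when `M` is PSD, else `0`. -/
def matSqrt {n : Type*} [Fintype n] [DecidableEq n] (M : Matrix n n ℂ) : Matrix n n ℂ :=
  if h : M.PosSemidef then CFC.sqrt M else 0

/-- trace (Schatten-1) norm `Tr √(MᴴM)`. -/
def traceNorm {n : Type*} [Fintype n] [DecidableEq n] (M : Matrix n n ℂ) : ℝ :=
  (matSqrt (Mᴴ * M)).trace.re

/-- trace distance. -/
def traceDist {n : Type*} [Fintype n] [DecidableEq n] (ρ σ : Matrix n n ℂ) : ℝ :=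
  traceNorm (ρ - σ) / 2

/-- fidelity `‖√ρ√σ‖₁`. -/
def fidelity {n : Type*} [Fintype n] [DecidableEq n] (ρ σ : Matrix n n ℂ) : ℝ :=
  traceNorm (matSqrt ρ * matSqrt σ)

/-- partial trace over the first tensor factor. -/
def trFst {a b : Type*} [Fintype a] (M : Matrix (a × b) (a × b) ℂ) : Matrix b b ℂ :=
  Matrix.of fun i j => ∑ k, M (k, i) (k, j)

/-- partial trace over the second tensor factor. -/
def trSnd {a b : Type*} [Fintype b] (M : Matrix (a × b) (a × b) ℂ) : Matrix a a ℂ :=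
  Matrix.of fun i j => ∑ k, M (i, k) (j, k)

/-- rank-one projector `|v⟩⟨v|`. -/
def outerP {n : Type*} (v : n → ℂ) : Matrix n n ℂ :=
  Matrix.of fun i j => v i * star (v j)

/-- tensor product of vectors. -/
def vkron {a b : Type*} (v : a → ℂ) (w : b → ℂ) : a × b → ℂ :=
  fun p => v p.1 * w p.2


/-- the superposition `cos(θ/2)|α₀⟩ + e^{iφ} sin(θ/2)|α₁⟩`. -/
def supvec {A B : Type*} (a0 a1 : A × B → ℂ) (th ph : ℝ) : A × B → ℂ :=
  ((Real.cos (th/2) : ℂ)) • a0 + (Complex.exp (Complex.I * ph) * (Real.sin (th/2) : ℂ)) • a1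

/-- optimal equiprobable two-state discrimination probability. -/
def pguess {n : Type*} [Fintype n] [DecidableEq n] (ρ σ : Matrix n n ℂ) : ℝ :=
  1/2 + traceNorm (ρ - σ) / 4

section Basics
variable {n : Type*} [Fintype n] [DecidableEq n]

open scoped MatrixOrder in
lemma matSqrt_unique {M Q : Matrix n n ℂ} (hQ : Q.PosSemidef) (h : Q * Q = M) :
    matSqrt M = Q := by
  have hM : M.PosSemidef := by
    rw [← h, ← pow_two]; exact hQ.pow 2
  rw [matSqrt, dif_pos hM]
  exact CFC.sqrt_unique h hQ.nonneg

lemma matSqrt_zero : matSqrt (0 : Matrix n n ℂ) = 0 :=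
  matSqrt_unique .zero (by simp)

/-- Euclidean norm of a complex vector. -/
def cnorm (x : n → ℂ) : ℝ := Real.sqrt (star x ⬝ᵥ x).re

lemma dot_self_re_nonneg (x : n → ℂ) : 0 ≤ (star x ⬝ᵥ x).re := by
  simp only [dotProduct, Pi.star_apply, Complex.star_def,
    ← Complex.normSq_eq_conj_mul_self, Complex.re_sum, Complex.ofReal_re]
  exact Finset.sum_nonneg fun i _ => Complex.normSq_nonneg (x i)

lemma cnorm_nonneg (x : n → ℂ) : 0 ≤ cnorm x := Real.sqrt_nonneg _

lemma cnorm_sq (x : n → ℂ) : cnorm x ^ 2 = (star x ⬝ᵥ x).re := by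
  rw [cnorm, Real.sq_sqrt (dot_self_re_nonneg x)]

lemma dot_self_ofReal (x : n → ℂ) : star x ⬝ᵥ x = ((star x ⬝ᵥ x).re : ℂ) := by
  simp only [dotProduct, Pi.star_apply, Complex.star_def,
    ← Complex.normSq_eq_conj_mul_self, Complex.re_sum, Complex.ofReal_re]
  push_cast
  rfl

lemma cnorm_sq_eq (x : n → ℂ) : star x ⬝ᵥ x = ((cnorm x ^ 2 : ℝ) : ℂ) := by
  rw [cnorm_sq]; exact dot_self_ofReal x

/-- Cauchy–Schwarz for the complex dot product. -/
lemma cs_dot (x y : n → ℂ) : ‖(star x ⬝ᵥ y)‖ ≤ cnorm x * cnorm y := by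
  classical
  let x' : EuclideanSpace ℂ n := WithLp.toLp 2 x
  let y' : EuclideanSpace ℂ n := WithLp.toLp 2 y
  have h1 : (inner ℂ x' y' : ℂ) = star x ⬝ᵥ y := by
    simp [PiLp.inner_apply, RCLike.inner_apply, dotProduct, x', y', Complex.star_def, mul_comm]
  have key : ∀ z : EuclideanSpace ℂ n, ‖z‖ = cnorm z := by
    intro z
    rw [EuclideanSpace.norm_eq, cnorm]
    congr 1
    simp only [dotProduct, Pi.star_apply, Complex.star_def,
      ← Complex.normSq_eq_conj_mul_self, Complex.re_sum, Complex.ofReal_re]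
    refine Finset.sum_congr rfl fun i _ => ?_
    rw [Complex.normSq_eq_norm_sq]
  calc ‖(star x ⬝ᵥ y)‖ = ‖(inner ℂ x' y' : ℂ)‖ := by rw [h1]
    _ ≤ ‖x'‖ * ‖y'‖ := norm_inner_le_norm x' y'
    _ = cnorm x * cnorm y := by rw [key x', key y']

end Basics

section Duality
variable {n : Type*} [Fintype n] [DecidableEq n]

lemma inner_eq_dot (x y : n → ℂ) :
    (inner ℂ (WithLp.toLp 2 x : EuclideanSpace ℂ n) (WithLp.toLp 2 y : EuclideanSpace ℂ n) : ℂ)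
      = star x ⬝ᵥ y := by
  simp [PiLp.inner_apply, RCLike.inner_apply, dotProduct, Complex.star_def, mul_comm]

lemma dot_mulVec_mulVec (M N : Matrix n n ℂ) (x y : n → ℂ) :
    star (M *ᵥ x) ⬝ᵥ (N *ᵥ y) = star x ⬝ᵥ ((Mᴴ * N) *ᵥ y) := by
  rw [star_mulVec, ← mulVec_mulVec]
  simp [dotProduct_mulVec, Matrix.vecMul_vecMul]

lemma cnorm_unitary {V : Matrix n n ℂ} (hV : star V * V = 1) (x : n → ℂ) :
    cnorm (V *ᵥ x) = cnorm x := by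
  unfold cnorm
  rw [show star (V *ᵥ x) ⬝ᵥ (V *ᵥ x) = star x ⬝ᵥ ((Vᴴ * V) *ᵥ x) from
    dot_mulVec_mulVec V V x x, show Vᴴ = star V from rfl, hV, one_mulVec]

lemma conjT_mul_mul_apply (G M W' : Matrix n n ℂ) (i j : n) :
    (star G * M * W') i j = star (fun k => G k i) ⬝ᵥ (M *ᵥ fun k => W' k j) := by
  simp only [Matrix.mul_apply, star_eq_conjTranspose, conjTranspose_apply, dotProduct,
    mulVec, Pi.star_apply, Finset.sum_mul, Finset.mul_sum]
  rw [Finset.sum_comm]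
  exact Finset.sum_congr rfl fun k _ => Finset.sum_congr rfl fun l _ => by ring

set_option maxHeartbeats 1600000 in
theorem traceNorm_key (X : Matrix n n ℂ) :
    0 ≤ traceNorm X ∧
    (∃ V ∈ Matrix.unitaryGroup n ℂ, (V * X).trace = (traceNorm X : ℂ)) ∧
    (∀ W₀ ∈ Matrix.unitaryGroup n ℂ, ‖((W₀ * X).trace)‖ ≤ traceNorm X) := by
  classical
  have hH : (Xᴴ * X).PosSemidef := Matrix.posSemidef_conjTranspose_mul_self X
  have hHer : (Xᴴ * X).IsHermitian := hH.isHermitian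
  set W : Matrix n n ℂ := (hHer.eigenvectorUnitary : Matrix n n ℂ) with hW
  set d : n → ℝ := hHer.eigenvalues with hd
  have hdnn : ∀ i, 0 ≤ d i := hH.eigenvalues_nonneg
  have hWsm : star W * W = 1 := Matrix.mem_unitaryGroup_iff'.mp hHer.eigenvectorUnitary.2
  have hWms : W * star W = 1 := Matrix.mem_unitaryGroup_iff.mp hHer.eigenvectorUnitary.2
  have hsp : Xᴴ * X = W * Matrix.diagonal (RCLike.ofReal ∘ d) * star W :=
    hHer.spectral_theorem
  have hdiag : star W * (Xᴴ * X) * W = Matrix.diagonal (RCLike.ofReal ∘ d) := by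
    rw [hsp]
    rw [Matrix.mul_assoc, Matrix.mul_assoc, hWsm, Matrix.mul_one, ← Matrix.mul_assoc, hWsm,
      Matrix.one_mul]
  set w : n → n → ℂ := fun i k => W k i with hw
  have hcol : ∀ (M : Matrix n n ℂ) i j, (star W * M * W) i j = star (w i) ⬝ᵥ (M *ᵥ w j) :=
    fun M i j => conjT_mul_mul_apply W M W i j
  have hXw : ∀ i, star (X *ᵥ w i) ⬝ᵥ (X *ᵥ w i) = ((d i : ℝ) : ℂ) := by
    intro i
    rw [dot_mulVec_mulVec, ← hcol (Xᴴ * X) i i, hdiag]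
    simp [Matrix.diagonal_apply_eq]
  have hXwij : ∀ i j, star (X *ᵥ w i) ⬝ᵥ (X *ᵥ w j)
      = Matrix.diagonal (RCLike.ofReal ∘ d) i j := by
    intro i j
    rw [dot_mulVec_mulVec, ← hcol (Xᴴ * X) i j, hdiag]
  have hcw1 : ∀ i, star (w i) ⬝ᵥ w i = 1 := by
    intro i
    have h1 := conjT_mul_mul_apply W 1 W i i
    rw [Matrix.mul_one, hWsm, Matrix.one_mulVec] at h1
    have : ((1 : Matrix n n ℂ)) i i = star (w i) ⬝ᵥ w i := h1
    rw [← this, Matrix.one_apply_eq]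
  have hcw : ∀ i, cnorm (w i) = 1 := by
    intro i
    rw [cnorm, hcw1 i]
    simp
  have hcnX : ∀ i, cnorm (X *ᵥ w i) = Real.sqrt (d i) := by
    intro i
    rw [cnorm, hXw]
    simp
  set D' : Matrix n n ℂ := Matrix.diagonal (fun i => ((Real.sqrt (d i) : ℝ) : ℂ)) with hD'
  have hDD : D' * D' = Matrix.diagonal (RCLike.ofReal ∘ d) := by
    rw [hD', Matrix.diagonal_mul_diagonal]
    refine congrArg Matrix.diagonal (funext fun i => ?_)
    rw [← Complex.ofReal_mul, Real.mul_self_sqrt (hdnn i)]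
    rfl
  have hsqrt : matSqrt (Xᴴ * X) = W * D' * star W := by
    apply matSqrt_unique
    · exact Matrix.PosSemidef.mul_mul_conjTranspose_same
        (Matrix.PosSemidef.diagonal fun i => by
          simpa using Complex.ofReal_nonneg.mpr (Real.sqrt_nonneg (d i))) W
    · have collapse : star W * (W * (D' * star W)) = D' * star W := by
        rw [← Matrix.mul_assoc (star W) W, hWsm, Matrix.one_mul]
      simp only [Matrix.mul_assoc]
      rw [collapse, ← Matrix.mul_assoc D' D', hDD, hsp, Matrix.mul_assoc]
  have htn : traceNorm X = ∑ i, Real.sqrt (d i) := by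
    rw [traceNorm, hsqrt, Matrix.trace_mul_cycle, hWsm, Matrix.one_mul,
      hD', Matrix.trace_diagonal]
    simp [Complex.re_sum]
  refine ⟨by rw [htn]; exact Finset.sum_nonneg fun i _ => Real.sqrt_nonneg _, ?_, ?_⟩
  · -- achievability
    set s : Set n := {i | d i ≠ 0} with hs
    set v : n → EuclideanSpace ℂ n :=
      fun i => ((((Real.sqrt (d i))⁻¹ : ℝ) : ℂ)) • (WithLp.toLp 2 (X *ᵥ w i) : EuclideanSpace ℂ n)
      with hv
    have hon : Orthonormal ℂ (s.restrict v) := by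
      rw [orthonormal_iff_ite]
      rintro ⟨i, hi⟩ ⟨j, hj⟩
      have hip : (inner ℂ (v i) (v j) : ℂ)
          = (((Real.sqrt (d i))⁻¹ : ℝ) : ℂ) * (((Real.sqrt (d j))⁻¹ : ℝ) : ℂ)
            * (star (X *ᵥ w i) ⬝ᵥ (X *ᵥ w j)) := by
        rw [hv]
        simp only [inner_smul_left, inner_smul_right, Complex.star_def, Complex.conj_ofReal]
        rw [inner_eq_dot]
        ring
      show (inner ℂ (v i) (v j) : ℂ) = _
      rw [hip, hXwij i j]
      by_cases hij : i = j
      · subst hij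
        have hdi : (0:ℝ) < d i := lt_of_le_of_ne (hdnn i) (Ne.symm hi)
        have hval : ((Real.sqrt (d i))⁻¹ : ℝ) * ((Real.sqrt (d i))⁻¹ : ℝ) * (d i) = 1 := by
          rw [← Real.mul_self_sqrt (le_of_lt hdi)]
          have : Real.sqrt (d i) ≠ 0 := ne_of_gt (Real.sqrt_pos.mpr hdi)
          field_simp
          rw [Real.sqrt_sq (Real.sqrt_nonneg _)]
        rw [if_pos rfl, Matrix.diagonal_apply_eq]
        show (((Real.sqrt (d i))⁻¹ : ℝ) : ℂ) * (((Real.sqrt (d i))⁻¹ : ℝ) : ℂ) * ((d i : ℝ) : ℂ) = 1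
        rw [← Complex.ofReal_mul, ← Complex.ofReal_mul, hval]
        rfl
      · have hne : (⟨i, hi⟩ : s) ≠ ⟨j, hj⟩ := by simpa [Subtype.ext_iff] using hij
        rw [Matrix.diagonal_apply_ne _ hij, if_neg hne]
        ring
    obtain ⟨b, hb⟩ := hon.exists_orthonormalBasis_extension_of_card_eq
      finrank_euclideanSpace
    set G : Matrix n n ℂ := Matrix.of fun k i => (b i : EuclideanSpace ℂ n) k with hG
    have hbcol : ∀ i, (fun k => G k i) = (b i : EuclideanSpace ℂ n) := fun i => rfl
    have hGu : G ∈ Matrix.unitaryGroup n ℂ := by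
      rw [Matrix.mem_unitaryGroup_iff']
      ext i j
      have h2 : (star G * G) i j
          = star (fun k => G k i) ⬝ᵥ ((1 : Matrix n n ℂ) *ᵥ fun k => G k j) := by
        have h3 := conjT_mul_mul_apply G 1 G i j
        rwa [Matrix.mul_one] at h3
      rw [h2, Matrix.one_mulVec, ← inner_eq_dot]
      have h4 := orthonormal_iff_ite.mp b.orthonormal i j
      rw [show (WithLp.toLp 2 (fun k => G k i) : EuclideanSpace ℂ n) = b i from rfl,
        show (WithLp.toLp 2 (fun k => G k j) : EuclideanSpace ℂ n) = b j from rfl, h4]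
      simp [Matrix.one_apply]
    refine ⟨W * star G, mul_mem hHer.eigenvectorUnitary.2 (Unitary.star_mem hGu), ?_⟩
    have htr : (W * star G * X).trace = ∑ i, (star G * X * W) i i := by
      rw [Matrix.trace_mul_cycle W (star G) X, Matrix.trace_mul_cycle X W (star G)]
      rfl
    have hentry : ∀ i, (star G * X * W) i i = ((Real.sqrt (d i) : ℝ) : ℂ) := by
      intro i
      have hc := conjT_mul_mul_apply G X W i i
      rw [hc]
      by_cases hi : d i ≠ 0
      · have h5 : (fun k => G k i) = ((((Real.sqrt (d i))⁻¹ : ℝ) : ℂ)) • (X *ᵥ w i) :=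
          by have := congrArg WithLp.ofLp (hb i hi); exact this
        rw [h5]
        calc star (((((Real.sqrt (d i))⁻¹ : ℝ) : ℂ)) • (X *ᵥ w i)) ⬝ᵥ (X *ᵥ fun k => W k i)
            = (((Real.sqrt (d i))⁻¹ : ℝ) : ℂ) * (star (X *ᵥ w i) ⬝ᵥ (X *ᵥ w i)) := by
              rw [star_smul, smul_dotProduct]
              simp [Complex.star_def, Complex.conj_ofReal, smul_eq_mul, hw]
          _ = (((Real.sqrt (d i))⁻¹ : ℝ) : ℂ) * ((d i : ℝ) : ℂ) := by rw [hXw i]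
          _ = ((Real.sqrt (d i) : ℝ) : ℂ) := by
              rw [← Complex.ofReal_mul]
              congr 1
              have hdi : 0 < d i := lt_of_le_of_ne (hdnn i) (Ne.symm hi)
              have hs0 : Real.sqrt (d i) ≠ 0 := ne_of_gt (Real.sqrt_pos.mpr hdi)
              rw [← Real.mul_self_sqrt hdi.le]
              field_simp
              rw [Real.sqrt_sq (Real.sqrt_nonneg _)]
      · push_neg at hi
        have hz0 : (X *ᵥ w i) = 0 := by
          apply dotProduct_star_self_eq_zero.mp
          rw [hXw i, hi]
          simp
        rw [show (X *ᵥ fun k => W k i) = (0 : n → ℂ) from hz0]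
        simp [hi]
    calc (W * star G * X).trace = ∑ i, (star G * X * W) i i := htr
      _ = ∑ i, ((Real.sqrt (d i) : ℝ) : ℂ) := Finset.sum_congr rfl fun i _ => hentry i
      _ = ((∑ i, Real.sqrt (d i) : ℝ) : ℂ) := by push_cast; rfl
      _ = ((traceNorm X : ℝ) : ℂ) := by rw [htn]
  · -- upper bound
    intro W₀ hW₀
    have hW₀' : star W₀ * W₀ = 1 := Matrix.mem_unitaryGroup_iff'.mp hW₀
    have hcyc : (star W * (W₀ * X) * W).trace = (W₀ * X).trace := by
      rw [Matrix.trace_mul_cycle, hWms, Matrix.one_mul]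
    have htr : (W₀ * X).trace = ∑ i, (star W * (W₀ * X) * W) i i := by
      rw [← hcyc]
      rfl
    rw [htr]
    calc ‖(∑ i, (star W * (W₀ * X) * W) i i)‖
        ≤ ∑ i, ‖((star W * (W₀ * X) * W) i i)‖ := by
          simpa using
            norm_sum_le Finset.univ (fun i => (star W * (W₀ * X) * W) i i)
      _ ≤ ∑ i, Real.sqrt (d i) := by
          refine Finset.sum_le_sum fun i _ => ?_
          rw [hcol (W₀ * X) i i]
          calc ‖(star (w i) ⬝ᵥ ((W₀ * X) *ᵥ w i))‖
              ≤ cnorm (w i) * cnorm ((W₀ * X) *ᵥ w i) := cs_dot _ _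
            _ = Real.sqrt (d i) := by
                rw [hcw i, one_mul, ← Matrix.mulVec_mulVec, cnorm_unitary hW₀', hcnX i]
      _ = traceNorm X := htn.symm

end Duality

section TraceNormProps
variable {n : Type*} [Fintype n] [DecidableEq n]

lemma traceNorm_nonneg' (X : Matrix n n ℂ) : 0 ≤ traceNorm X := (traceNorm_key X).1

lemma traceNorm_abs_ofReal (X : Matrix n n ℂ) :
    ‖((traceNorm X : ℝ) : ℂ)‖ = traceNorm X := by
  rw [Complex.norm_real, Real.norm_eq_abs, abs_of_nonneg (traceNorm_nonneg' X)]

lemma trace_unitary_le (X : Matrix n n ℂ) {V : Matrix n n ℂ}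
    (hV : V ∈ Matrix.unitaryGroup n ℂ) :
    ‖((V * X).trace)‖ ≤ traceNorm X := (traceNorm_key X).2.2 V hV

lemma traceNorm_zero : traceNorm (0 : Matrix n n ℂ) = 0 := by
  rw [traceNorm]
  rw [show (0 : Matrix n n ℂ)ᴴ * 0 = 0 by simp, matSqrt_zero]
  simp

lemma traceNorm_triangle (X Y : Matrix n n ℂ) :
    traceNorm (X + Y) ≤ traceNorm X + traceNorm Y := by
  obtain ⟨V, hV, hVt⟩ := (traceNorm_key (X + Y)).2.1
  have hsplit : ((traceNorm (X + Y) : ℝ) : ℂ) = (V * X).trace + (V * Y).trace := by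
    rw [← hVt, Matrix.mul_add, Matrix.trace_add]
  have : traceNorm (X + Y) = ((V * X).trace).re + ((V * Y).trace).re := by
    have := congrArg Complex.re hsplit
    simpa using this
  rw [this]
  have h1 : ((V * X).trace).re ≤ traceNorm X :=
    le_trans (Complex.re_le_norm _) (trace_unitary_le X hV)
  have h2 : ((V * Y).trace).re ≤ traceNorm Y :=
    le_trans (Complex.re_le_norm _) (trace_unitary_le Y hV)
  linarith

lemma traceNorm_smul (z : ℂ) (X : Matrix n n ℂ) :
    traceNorm (z • X) = ‖z‖ * traceNorm X := by
  rcases eq_or_ne z 0 with hz | hz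
  · simp [hz, traceNorm_zero]
  refine le_antisymm ?_ ?_
  · obtain ⟨V, hV, hVt⟩ := (traceNorm_key (z • X)).2.1
    have habs : ‖((V * (z • X)).trace)‖ = traceNorm (z • X) := by
      rw [hVt, traceNorm_abs_ofReal]
    have : (V * (z • X)).trace = z * (V * X).trace := by
      rw [Matrix.mul_smul, Matrix.trace_smul]
      simp
    rw [← habs, this, norm_mul]
    exact mul_le_mul_of_nonneg_left (trace_unitary_le X hV) (norm_nonneg z)
  · obtain ⟨V, hV, hVt⟩ := (traceNorm_key X).2.1
    set ζ : ℂ := ((‖z‖ : ℝ) : ℂ) / z with hζ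
    have hζz : ζ * z = ((‖z‖ : ℝ) : ℂ) := div_mul_cancel₀ _ hz
    have hζabs : ‖ζ‖ = 1 := by
      rw [hζ, norm_div, Complex.norm_real, Real.norm_eq_abs, abs_of_nonneg (norm_nonneg z)]
      exact div_self (norm_ne_zero_iff.mpr hz)
    have hVζ : (ζ • V) ∈ Matrix.unitaryGroup n ℂ := by
      rw [Matrix.mem_unitaryGroup_iff']
      rw [star_smul, Matrix.smul_mul, Matrix.mul_smul, smul_smul]
      rw [Matrix.mem_unitaryGroup_iff'.mp hV]
      have : (starRingEnd ℂ) ζ * ζ = 1 := by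
        rw [← Complex.normSq_eq_conj_mul_self, Complex.normSq_eq_norm_sq, hζabs]
        norm_num
      rw [show star ζ = (starRingEnd ℂ) ζ from rfl, this, one_smul]
    have hval : ((ζ • V) * (z • X)).trace = ((‖z‖ * traceNorm X : ℝ) : ℂ) := by
      rw [Matrix.smul_mul, Matrix.mul_smul, smul_smul, Matrix.trace_smul, hVt]
      rw [hζz, smul_eq_mul]
      push_cast
      ring
    have := trace_unitary_le (z • X) hVζ
    rw [hval, Complex.norm_real, Real.norm_eq_abs,
      abs_of_nonneg (mul_nonneg (norm_nonneg z) (traceNorm_nonneg' X))] at this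
    exact this

lemma traceNorm_conjTranspose_le (X : Matrix n n ℂ) : traceNorm Xᴴ ≤ traceNorm X := by
  obtain ⟨V, hV, hVt⟩ := (traceNorm_key Xᴴ).2.1
  have h1 : (V * Xᴴ) = (X * Vᴴ)ᴴ := by
    rw [Matrix.conjTranspose_mul, Matrix.conjTranspose_conjTranspose]
  have h2 : (V * Xᴴ).trace = star ((X * Vᴴ).trace) := by rw [h1, Matrix.trace_conjTranspose]
  have h3 : ‖((V * Xᴴ).trace)‖ = ‖((Vᴴ * X).trace)‖ := by
    rw [h2, Matrix.trace_mul_comm]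
    exact Complex.norm_conj _
  have h4 : Vᴴ ∈ Matrix.unitaryGroup n ℂ := by
    rw [← Matrix.star_eq_conjTranspose]
    exact Unitary.star_mem hV
  calc traceNorm Xᴴ = ‖((V * Xᴴ).trace)‖ := by rw [hVt, traceNorm_abs_ofReal]
    _ = ‖((Vᴴ * X).trace)‖ := h3
    _ ≤ traceNorm X := trace_unitary_le X h4

lemma traceNorm_conjTranspose (X : Matrix n n ℂ) : traceNorm Xᴴ = traceNorm X := by
  refine le_antisymm (traceNorm_conjTranspose_le X) ?_
  have := traceNorm_conjTranspose_le Xᴴ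
  rwa [Matrix.conjTranspose_conjTranspose] at this

end TraceNormProps

section PTrace
variable {A B : Type*} [Fintype A] [DecidableEq A] [Fintype B] [DecidableEq B]

lemma kron_conjT (M : Matrix A A ℂ) (N : Matrix B B ℂ) : (M ⊗ₖ N)ᴴ = Mᴴ ⊗ₖ Nᴴ := by
  ext ⟨i, k⟩ ⟨j, l⟩
  simp [Matrix.conjTranspose_apply, Matrix.kroneckerMap_apply, star_mul']

lemma kron_one_unitary {U : Matrix A A ℂ} (hU : U ∈ Matrix.unitaryGroup A ℂ) :
    (U ⊗ₖ (1 : Matrix B B ℂ)) ∈ Matrix.unitaryGroup (A × B) ℂ := by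
  rw [Matrix.mem_unitaryGroup_iff', Matrix.star_eq_conjTranspose, kron_conjT,
    ← Matrix.mul_kronecker_mul, Matrix.conjTranspose_one, Matrix.one_mul]
  rw [show Uᴴ * U = 1 from Matrix.mem_unitaryGroup_iff'.mp hU, Matrix.one_kronecker_one]

lemma one_kron_unitary {U : Matrix B B ℂ} (hU : U ∈ Matrix.unitaryGroup B ℂ) :
    ((1 : Matrix A A ℂ) ⊗ₖ U) ∈ Matrix.unitaryGroup (A × B) ℂ := by
  rw [Matrix.mem_unitaryGroup_iff', Matrix.star_eq_conjTranspose, kron_conjT,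
    ← Matrix.mul_kronecker_mul, Matrix.conjTranspose_one, Matrix.one_mul]
  rw [show Uᴴ * U = 1 from Matrix.mem_unitaryGroup_iff'.mp hU, Matrix.one_kronecker_one]

lemma trace_kron_one (U : Matrix A A ℂ) (Y : Matrix (A × B) (A × B) ℂ) :
    ((U ⊗ₖ (1 : Matrix B B ℂ)) * Y).trace = (U * trSnd Y).trace := by
  simp only [Matrix.trace, Matrix.diag, Matrix.mul_apply, trSnd, Matrix.of_apply,
    Fintype.sum_prod_type, Matrix.kroneckerMap_apply, Matrix.one_apply, mul_ite, mul_one,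
    mul_zero, ite_mul, zero_mul, Finset.sum_ite_eq, Finset.sum_ite_eq', Finset.mem_univ,
    if_true, Finset.mul_sum]
  refine Finset.sum_congr rfl fun i _ => ?_
  exact Finset.sum_comm

lemma trace_one_kron (U : Matrix B B ℂ) (Y : Matrix (A × B) (A × B) ℂ) :
    (((1 : Matrix A A ℂ) ⊗ₖ U) * Y).trace = (U * trFst Y).trace := by
  have expand : (((1 : Matrix A A ℂ) ⊗ₖ U) * Y).trace
      = ∑ i : A, ∑ k : B, ∑ j : A, ∑ l : B,
          (if i = j then U k l * Y (j, l) (i, k) else 0) := by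
    simp only [Matrix.trace, Matrix.diag, Matrix.mul_apply, Fintype.sum_prod_type,
      Matrix.kroneckerMap_apply, Matrix.one_apply, ite_mul, one_mul, zero_mul]
  have expandR : (U * trFst Y).trace = ∑ k : B, ∑ l : B, ∑ i : A, U k l * Y (i, l) (i, k) := by
    simp only [Matrix.trace, Matrix.diag, Matrix.mul_apply, trFst, Matrix.of_apply,
      Finset.mul_sum]
  have step : ∀ (i : A) (k : B),
      (∑ j : A, ∑ l : B, if i = j then U k l * Y (j, l) (i, k) else 0)
        = ∑ l : B, U k l * Y (i, l) (i, k) := by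
    intro i k
    rw [Finset.sum_comm]
    refine Finset.sum_congr rfl fun l _ => ?_
    simp
  calc (((1 : Matrix A A ℂ) ⊗ₖ U) * Y).trace
      = ∑ i : A, ∑ k : B, ∑ j : A, ∑ l : B,
          (if i = j then U k l * Y (j, l) (i, k) else 0) := expand
    _ = ∑ i : A, ∑ k : B, ∑ l : B, U k l * Y (i, l) (i, k) :=
        Finset.sum_congr rfl fun i _ => Finset.sum_congr rfl fun k _ => step i k
    _ = ∑ k : B, ∑ i : A, ∑ l : B, U k l * Y (i, l) (i, k) := Finset.sum_comm
    _ = ∑ k : B, ∑ l : B, ∑ i : A, U k l * Y (i, l) (i, k) :=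
        Finset.sum_congr rfl fun k _ => Finset.sum_comm
    _ = (U * trFst Y).trace := expandR.symm

lemma traceNorm_trSnd_le (Y : Matrix (A × B) (A × B) ℂ) :
    traceNorm (trSnd Y) ≤ traceNorm Y := by
  obtain ⟨V, hV, hVt⟩ := (traceNorm_key (trSnd Y)).2.1
  calc traceNorm (trSnd Y) = ‖((V * trSnd Y).trace)‖ := by
        rw [hVt, traceNorm_abs_ofReal]
    _ = ‖(((V ⊗ₖ (1 : Matrix B B ℂ)) * Y).trace)‖ := by rw [trace_kron_one]
    _ ≤ traceNorm Y := trace_unitary_le Y (kron_one_unitary hV)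

end PTrace

section CrossP
variable {n : Type*} [Fintype n] [DecidableEq n]

/-- rank one matrix `|u⟩⟨v|`. -/
def crossP {m : Type*} (u v : m → ℂ) : Matrix m m ℂ := Matrix.of fun i j => u i * star (v j)

lemma outerP_eq_crossP (v : n → ℂ) : outerP v = crossP v v := rfl

lemma dot_conj (x y : n → ℂ) : star x ⬝ᵥ y = starRingEnd ℂ (star y ⬝ᵥ x) := by
  simp only [dotProduct, Pi.star_apply, map_sum, Complex.star_def, _root_.map_mul,
    Complex.conj_conj]
  exact Finset.sum_congr rfl fun i _ => by ring

lemma crossP_conjT (u v : n → ℂ) : (crossP u v)ᴴ = crossP v u := by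
  ext i j
  simp [crossP, Matrix.conjTranspose_apply, star_mul', mul_comm]

lemma crossP_mul_crossP (x y z w : n → ℂ) :
    crossP x y * crossP z w = (star y ⬝ᵥ z) • crossP x w := by
  ext i j
  simp only [crossP, Matrix.mul_apply, Matrix.of_apply, Matrix.smul_apply, dotProduct,
    Pi.star_apply, smul_eq_mul, Finset.sum_mul]
  exact Finset.sum_congr rfl fun k _ => by ring

lemma psd_smul_outer (c : ℝ) (hc : 0 ≤ c) (y : n → ℂ) :
    (((c : ℝ) : ℂ) • crossP y y).PosSemidef := by
  refine Matrix.posSemidef_iff_dotProduct_mulVec.mpr ⟨?_, ?_⟩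
  · unfold Matrix.IsHermitian
    rw [Matrix.conjTranspose_smul, crossP_conjT]
    simp [Complex.star_def, Complex.conj_ofReal]
  · intro z
    have hmv : (crossP y y) *ᵥ z = (star y ⬝ᵥ z) • y := by
      funext i
      simp only [crossP, Matrix.mulVec, Matrix.of_apply, dotProduct, Pi.smul_apply,
        Pi.star_apply, smul_eq_mul, Finset.mul_sum]
      rw [Finset.sum_mul]
      exact Finset.sum_congr rfl fun k _ => by ring
    rw [Matrix.smul_mulVec, hmv]
    rw [dotProduct_smul, dotProduct_smul, smul_eq_mul, smul_eq_mul,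
      show star z ⬝ᵥ y = starRingEnd ℂ (star y ⬝ᵥ z) from dot_conj z y,
      Complex.mul_conj, ← Complex.ofReal_mul, Complex.zero_le_real]
    exact mul_nonneg hc (Complex.normSq_nonneg _)

lemma cnorm_eq_zero_iff (y : n → ℂ) : cnorm y = 0 ↔ y = 0 := by
  constructor
  · intro h
    have h2 : (star y ⬝ᵥ y).re = 0 := by rw [← cnorm_sq, h]; norm_num
    have h3 : star y ⬝ᵥ y = 0 := by rw [dot_self_ofReal y, h2]; norm_num
    exact dotProduct_star_self_eq_zero.mp h3
  · intro h
    rw [h, cnorm]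
    simp

lemma traceNorm_crossP (x y : n → ℂ) : traceNorm (crossP x y) = cnorm x * cnorm y := by
  rcases eq_or_ne y 0 with hy | hy
  · have : crossP x y = 0 := by ext i j; simp [crossP, hy]
    rw [this, traceNorm_zero, hy]
    simp [cnorm]
  · have hny : 0 < cnorm y := by
      rcases lt_or_eq_of_le (cnorm_nonneg y) with h | h
      · exact h
      · exact absurd ((cnorm_eq_zero_iff y).mp h.symm) hy
    set c : ℝ := cnorm x * (cnorm y)⁻¹ with hc
    have hc0 : 0 ≤ c := mul_nonneg (cnorm_nonneg x) (inv_nonneg.mpr (cnorm_nonneg y))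
    have hQ : matSqrt ((crossP x y)ᴴ * crossP x y) = ((c : ℝ) : ℂ) • crossP y y := by
      apply matSqrt_unique (psd_smul_outer c hc0 y)
      rw [Matrix.smul_mul, Matrix.mul_smul, smul_smul, crossP_mul_crossP,
        cnorm_sq_eq y, smul_smul, crossP_conjT, crossP_mul_crossP, cnorm_sq_eq x]
      congr 1
      rw [← Complex.ofReal_mul, ← Complex.ofReal_mul]
      congr 1
      rw [hc]
      field_simp
    rw [traceNorm, hQ, Matrix.trace_smul]
    have htr : (crossP y y).trace = ((cnorm y ^ 2 : ℝ) : ℂ) := by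
      rw [Matrix.trace]
      simp only [Matrix.diag, crossP, Matrix.of_apply]
      rw [← cnorm_sq_eq y]
      simp [dotProduct, mul_comm]
    rw [htr, smul_eq_mul, ← Complex.ofReal_mul, Complex.ofReal_re, hc]
    field_simp

end CrossP

section PureChain
variable {n : Type*} [Fintype n] [DecidableEq n]

lemma outer_sub_outer_decomp (u v : n → ℂ) :
    outerP u - outerP v
      = (1/2 : ℂ) • crossP (u + v) (u - v) + (1/2 : ℂ) • crossP (u - v) (u + v) := by
  ext i j
  simp only [outerP, crossP, Matrix.sub_apply, Matrix.add_apply, Matrix.smul_apply,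
    Matrix.of_apply, Pi.add_apply, Pi.sub_apply, smul_eq_mul, star_add, star_sub]
  ring

lemma traceNorm_outer_sub_outer_le (u v : n → ℂ) {r : ℝ}
    (hu : star u ⬝ᵥ u = 1) (hv : star v ⬝ᵥ v = 1) (hvu : star v ⬝ᵥ u = ((r : ℝ) : ℂ)) :
    traceNorm (outerP u - outerP v) ≤ 2 * Real.sqrt (1 - r ^ 2) := by
  have huv : star u ⬝ᵥ v = ((r : ℝ) : ℂ) := by
    rw [dot_conj u v, hvu, Complex.conj_ofReal]
  have hplus : star (u + v) ⬝ᵥ (u + v) = (((2 + 2*r : ℝ)) : ℂ) := by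
    rw [star_add, add_dotProduct, dotProduct_add, dotProduct_add, hu, hv, huv, hvu]
    push_cast
    ring
  have hminus : star (u - v) ⬝ᵥ (u - v) = (((2 - 2*r : ℝ)) : ℂ) := by
    rw [star_sub, sub_dotProduct, dotProduct_sub, dotProduct_sub, hu, hv, huv, hvu]
    push_cast
    ring
  have hcp : cnorm (u + v) = Real.sqrt (2 + 2*r) := by rw [cnorm, hplus, Complex.ofReal_re]
  have hcm : cnorm (u - v) = Real.sqrt (2 - 2*r) := by rw [cnorm, hminus, Complex.ofReal_re]
  have h2p : (0:ℝ) ≤ 2 + 2*r := by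
    have h := cnorm_sq (u + v)
    rw [hplus, Complex.ofReal_re] at h
    rw [← h]
    positivity
  calc traceNorm (outerP u - outerP v)
      ≤ traceNorm ((1/2:ℂ) • crossP (u+v) (u-v)) + traceNorm ((1/2:ℂ) • crossP (u-v) (u+v)) := by
        rw [outer_sub_outer_decomp]
        exact traceNorm_triangle _ _
    _ = (1/2) * (cnorm (u+v) * cnorm (u-v)) + (1/2) * (cnorm (u-v) * cnorm (u+v)) := by
        rw [traceNorm_smul, traceNorm_smul, traceNorm_crossP, traceNorm_crossP]
        norm_num
    _ = cnorm (u+v) * cnorm (u-v) := by ring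
    _ = Real.sqrt ((2+2*r) * (2-2*r)) := by rw [hcp, hcm, ← Real.sqrt_mul h2p]
    _ = Real.sqrt (4 * (1 - r^2)) := by rw [show (2+2*r) * (2-2*r) = 4 * (1 - r^2) by ring]
    _ = 2 * Real.sqrt (1 - r^2) := by
        rw [Real.sqrt_mul (by norm_num : (0:ℝ) ≤ 4),
          show (4:ℝ) = 2^2 by norm_num, Real.sqrt_sq (by norm_num : (0:ℝ) ≤ 2)]

end PureChain

section Chain
variable {A B : Type*} [Fintype A] [DecidableEq A] [Fintype B] [DecidableEq B]

lemma trFst_sub (X Y : Matrix (A × B) (A × B) ℂ) : trFst (X - Y) = trFst X - trFst Y := by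
  ext i j
  simp [trFst, Finset.sum_sub_distrib]

lemma trSnd_sub (X Y : Matrix (A × B) (A × B) ℂ) : trSnd (X - Y) = trSnd X - trSnd Y := by
  ext i j
  simp [trSnd, Finset.sum_sub_distrib]

lemma trace_mul_trFst_cross (V : Matrix B B ℂ) (x y : A × B → ℂ) :
    (V * trFst (crossP x y)).trace = star y ⬝ᵥ (((1 : Matrix A A ℂ) ⊗ₖ V) *ᵥ x) := by
  have hR : star y ⬝ᵥ (((1 : Matrix A A ℂ) ⊗ₖ V) *ᵥ x)
      = ∑ k : A, ∑ i : B, star (y (k, i)) * ∑ j : B, V i j * x (k, j) := by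
    simp only [dotProduct, Matrix.mulVec, Fintype.sum_prod_type, Matrix.kroneckerMap_apply,
      Matrix.one_apply, ite_mul, one_mul, zero_mul, Pi.star_apply]
    refine Finset.sum_congr rfl fun k _ => Finset.sum_congr rfl fun i _ => ?_
    congr 1
    rw [Finset.sum_comm]
    refine Finset.sum_congr rfl fun j _ => ?_
    simp
  have hL : (V * trFst (crossP x y)).trace
      = ∑ i : B, ∑ j : B, V i j * ∑ k : A, x (k, j) * star (y (k, i)) := by
    simp only [Matrix.trace, Matrix.diag, Matrix.mul_apply, trFst, crossP, Matrix.of_apply]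
  rw [hL, hR]
  simp only [Finset.mul_sum]
  calc ∑ i : B, ∑ j : B, ∑ k : A, V i j * (x (k, j) * star (y (k, i)))
      = ∑ i : B, ∑ k : A, ∑ j : B, V i j * (x (k, j) * star (y (k, i))) :=
        Finset.sum_congr rfl fun i _ => Finset.sum_comm
    _ = ∑ k : A, ∑ i : B, ∑ j : B, V i j * (x (k, j) * star (y (k, i))) := Finset.sum_comm
    _ = ∑ k : A, ∑ i : B, ∑ j : B, star (y (k, i)) * (V i j * x (k, j)) :=
        Finset.sum_congr rfl fun k _ => Finset.sum_congr rfl fun i _ =>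
          Finset.sum_congr rfl fun j _ => by ring

lemma trSnd_outer_kron {V : Matrix B B ℂ} (hV : star V * V = 1) (x : A × B → ℂ) :
    trSnd (outerP (((1 : Matrix A A ℂ) ⊗ₖ V) *ᵥ x)) = trSnd (outerP x) := by
  have hVc : ∀ m m' : B, (∑ k, V k m * star (V k m')) = if m' = m then 1 else 0 := by
    intro m m'
    have h := congrFun (congrFun hV m') m
    rw [Matrix.mul_apply, Matrix.one_apply] at h
    rw [← h]
    refine Finset.sum_congr rfl fun k _ => ?_
    rw [Matrix.star_apply]
    ring
  have ha : ∀ (p : A) (k : B),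
      (((1 : Matrix A A ℂ) ⊗ₖ V) *ᵥ x) (p, k) = ∑ m, V k m * x (p, m) := by
    intro p k
    simp only [Matrix.mulVec, dotProduct, Fintype.sum_prod_type, Matrix.kroneckerMap_apply,
      Matrix.one_apply, ite_mul, one_mul, zero_mul]
    rw [Finset.sum_comm]
    refine Finset.sum_congr rfl fun m _ => ?_
    simp
  ext i j
  simp only [trSnd, outerP, Matrix.of_apply]
  calc ∑ k : B, (((1 : Matrix A A ℂ) ⊗ₖ V) *ᵥ x) (i, k)
          * star ((((1 : Matrix A A ℂ) ⊗ₖ V) *ᵥ x) (j, k))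
      = ∑ k : B, (∑ m, V k m * x (i, m)) * star (∑ m', V k m' * x (j, m')) := by
        refine Finset.sum_congr rfl fun k _ => ?_
        rw [ha i k, ha j k]
    _ = ∑ k : B, ∑ m, ∑ m', (V k m * x (i, m)) * (star (V k m') * star (x (j, m'))) := by
        refine Finset.sum_congr rfl fun k _ => ?_
        rw [star_sum, Finset.sum_mul]
        refine Finset.sum_congr rfl fun m _ => ?_
        rw [Finset.mul_sum]
        refine Finset.sum_congr rfl fun m' _ => ?_
        rw [star_mul']
    _ = ∑ m, ∑ m', (x (i, m) * star (x (j, m'))) * ∑ k : B, V k m * star (V k m') := by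
        rw [Finset.sum_comm]
        refine Finset.sum_congr rfl fun m _ => ?_
        rw [Finset.sum_comm]
        refine Finset.sum_congr rfl fun m' _ => ?_
        rw [Finset.mul_sum]
        refine Finset.sum_congr rfl fun k _ => by ring
    _ = ∑ m, ∑ m', (x (i, m) * star (x (j, m'))) * (if m' = m then 1 else 0) := by
        refine Finset.sum_congr rfl fun m _ => Finset.sum_congr rfl fun m' _ => by
          rw [hVc m m']
    _ = ∑ m, x (i, m) * star (x (j, m)) := by
        refine Finset.sum_congr rfl fun m _ => ?_
        simp only [mul_ite, mul_one, mul_zero, Finset.sum_ite_eq', Finset.mem_univ, if_true]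

lemma offdiag_chain (a0 a1 : A × B → ℂ) (h0 : star a0 ⬝ᵥ a0 = 1) (h1 : star a1 ⬝ᵥ a1 = 1) :
    traceNorm (trFst (crossP a0 a1))
      ≤ Real.sqrt (1 - (traceNorm (trSnd (outerP a0) - trSnd (outerP a1)) / 2) ^ 2) := by
  obtain ⟨V, hV, hVt⟩ := (traceNorm_key (trFst (crossP a0 a1))).2.1
  have hKu : star ((1 : Matrix A A ℂ) ⊗ₖ V) * ((1 : Matrix A A ℂ) ⊗ₖ V) = 1 :=
    Matrix.mem_unitaryGroup_iff'.mp (one_kron_unitary hV)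
  set a0' : A × B → ℂ := ((1 : Matrix A A ℂ) ⊗ₖ V) *ᵥ a0 with ha0'
  set r : ℝ := traceNorm (trFst (crossP a0 a1)) with hrdef
  have hr0 : 0 ≤ r := traceNorm_nonneg' _
  have hq : star a1 ⬝ᵥ a0' = ((r : ℝ) : ℂ) := by
    rw [ha0', ← trace_mul_trFst_cross, hVt]
  have h0' : star a0' ⬝ᵥ a0' = 1 := by
    rw [ha0', dot_mulVec_mulVec, show ((1 : Matrix A A ℂ) ⊗ₖ V)ᴴ
      = star ((1 : Matrix A A ℂ) ⊗ₖ V) from rfl, hKu, one_mulVec, h0]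
  have habsq : ‖(star a1 ⬝ᵥ a0')‖ = r := by
    rw [hq, Complex.norm_real, Real.norm_eq_abs, abs_of_nonneg hr0]
  have hζ : ∃ ζ : ℂ, ‖ζ‖ = 1 ∧ ζ * (star a1 ⬝ᵥ a0') = ((r : ℝ) : ℂ) := by
    exact ⟨1, by simp, by rw [one_mul, hq]⟩
  obtain ⟨ζ, hζ1, hζq⟩ := hζ
  have hconj1 : (starRingEnd ℂ) ζ * ζ = 1 := by
    rw [← Complex.normSq_eq_conj_mul_self, Complex.normSq_eq_norm_sq, hζ1]
    norm_num
  set u : A × B → ℂ := ζ • a0' with hu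
  have hu1 : star u ⬝ᵥ u = 1 := by
    rw [hu, star_smul, smul_dotProduct, dotProduct_smul, smul_eq_mul, smul_eq_mul, h0',
      mul_one]
    exact hconj1
  have hvu : star a1 ⬝ᵥ u = ((r : ℝ) : ℂ) := by
    rw [hu, dotProduct_smul, smul_eq_mul, hζq]
  have houter : outerP u = outerP a0' := by
    ext i j
    simp only [outerP, Matrix.of_apply, hu, Pi.smul_apply, smul_eq_mul]
    calc ζ * a0' i * star (ζ * a0' j)
        = ((starRingEnd ℂ) ζ * ζ) * (a0' i * star (a0' j)) := by
          simp only [star_mul', Complex.star_def]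
          ring
      _ = a0' i * star (a0' j) := by rw [hconj1, one_mul]
  have hred : trSnd (outerP a0') = trSnd (outerP a0) := by
    rw [ha0']
    exact trSnd_outer_kron (A := A) (B := B) (Matrix.mem_unitaryGroup_iff'.mp hV) a0
  set D : ℝ := traceNorm (trSnd (outerP a0) - trSnd (outerP a1)) with hD
  have hDb : D ≤ 2 * Real.sqrt (1 - r^2) := by
    have hsub : trSnd (outerP a0) - trSnd (outerP a1) = trSnd (outerP u - outerP a1) := by
      rw [trSnd_sub, houter, hred]
    rw [hD, hsub]
    exact le_trans (traceNorm_trSnd_le _) (traceNorm_outer_sub_outer_le u a1 hu1 h1 hvu)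
  have hr1 : r ≤ 1 := by
    have hc1 : cnorm a1 = 1 := by rw [cnorm, h1]; simp
    have hc0 : cnorm a0' = 1 := by rw [cnorm, h0']; simp
    have hcs := cs_dot a1 a0'
    rw [habsq, hc1, hc0] at hcs
    simpa using hcs
  have h1r : 0 ≤ 1 - r^2 := by nlinarith
  have hD0 : 0 ≤ D := traceNorm_nonneg' _
  have hD2 : (D/2)^2 ≤ 1 - r^2 := by
    have hD2' : D/2 ≤ Real.sqrt (1 - r^2) := by linarith
    calc (D/2)^2 ≤ Real.sqrt (1 - r^2)^2 := by
          apply pow_le_pow_left₀ (by positivity) hD2'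
      _ = 1 - r^2 := Real.sq_sqrt h1r
  calc r = Real.sqrt (r^2) := (Real.sqrt_sq hr0).symm
    _ ≤ Real.sqrt (1 - (D/2)^2) := Real.sqrt_le_sqrt (by nlinarith)

end Chain

section Main
variable {A B : Type*} [Fintype A] [DecidableEq A] [Fintype B] [DecidableEq B]

lemma trFst_smul (z : ℂ) (X : Matrix (A × B) (A × B) ℂ) : trFst (z • X) = z • trFst X := by
  ext i j
  simp [trFst, Finset.mul_sum]

lemma trFst_conjT (X : Matrix (A × B) (A × B) ℂ) : trFst Xᴴ = (trFst X)ᴴ := by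
  ext i j
  simp [trFst, Matrix.conjTranspose_apply, star_sum]

lemma outer_comb_sub (x y x' y' : ℂ) (a b : A × B → ℂ) :
    outerP (x • a + y • b) - outerP (x' • a + y' • b)
      = (x * star x - x' * star x') • crossP a a
        + (x * star y - x' * star y') • crossP a b
        + (y * star x - y' * star x') • crossP b a
        + (y * star y - y' * star y') • crossP b b := by
  ext i j
  simp only [outerP, crossP, Matrix.sub_apply, Matrix.add_apply, Matrix.smul_apply,
    Matrix.of_apply, Pi.add_apply, Pi.smul_apply, smul_eq_mul, star_add, star_mul']
  ring

/-- scalar computations -/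
lemma xsx (th : ℝ) :
    ((Real.cos (th/2) : ℂ)) * star ((Real.cos (th/2) : ℂ))
      = (((1 + Real.cos th)/2 : ℝ) : ℂ) := by
  rw [Complex.star_def, Complex.conj_ofReal, ← Complex.ofReal_mul]
  congr 1
  have := Real.cos_sq (th/2)
  rw [show 2 * (th/2) = th by ring] at this
  nlinarith [this]

lemma exp_conj_exp (ph : ℝ) :
    starRingEnd ℂ (Complex.exp (Complex.I * ph)) * Complex.exp (Complex.I * ph) = 1 := by
  rw [← Complex.exp_conj, ← Complex.exp_add]
  rw [show (starRingEnd ℂ) (Complex.I * ph) = -(Complex.I * ph) by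
    simp [Complex.conj_I, Complex.conj_ofReal]]
  simp

lemma ysy (th ph : ℝ) :
    (Complex.exp (Complex.I * ph) * (Real.sin (th/2) : ℂ))
        * star (Complex.exp (Complex.I * ph) * (Real.sin (th/2) : ℂ))
      = (((1 - Real.cos th)/2 : ℝ) : ℂ) := by
  rw [star_mul', Complex.star_def, Complex.conj_ofReal]
  rw [show Complex.exp (Complex.I * ph) * (Real.sin (th/2) : ℂ)
      * ((starRingEnd ℂ) (Complex.exp (Complex.I * ph)) * (Real.sin (th/2) : ℂ))
    = ((starRingEnd ℂ) (Complex.exp (Complex.I * ph)) * Complex.exp (Complex.I * ph))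
      * ((Real.sin (th/2) : ℂ) * (Real.sin (th/2) : ℂ)) by ring]
  rw [exp_conj_exp, one_mul, ← Complex.ofReal_mul]
  congr 1
  have h1 := Real.sin_sq (th/2)
  have h2 := Real.cos_sq (th/2)
  rw [show 2 * (th/2) = th by ring] at h2
  nlinarith [h1, h2]

lemma xsy (th ph : ℝ) :
    ((Real.cos (th/2) : ℂ)) * star (Complex.exp (Complex.I * ph) * (Real.sin (th/2) : ℂ))
      = ((Real.sin th : ℂ) * Complex.exp (-(Complex.I * ph))) / 2 := by
  rw [star_mul', Complex.star_def, Complex.conj_ofReal]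
  rw [show (starRingEnd ℂ) (Complex.exp (Complex.I * ph))
    = Complex.exp (-(Complex.I * ph)) by
      rw [← Complex.exp_conj]
      congr 1
      simp [Complex.conj_I, Complex.conj_ofReal]]
  have hs : (Real.sin th : ℂ) = 2 * (Real.sin (th/2) : ℂ) * (Real.cos (th/2) : ℂ) := by
    have := Real.sin_two_mul (th/2)
    rw [show 2 * (th/2) = th by ring] at this
    rw [this]
    push_cast
    ring
  rw [hs]
  ring

lemma ysx (th ph : ℝ) :
    (Complex.exp (Complex.I * ph) * (Real.sin (th/2) : ℂ)) * star ((Real.cos (th/2) : ℂ))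
      = starRingEnd ℂ (((Real.cos (th/2) : ℂ))
          * star (Complex.exp (Complex.I * ph) * (Real.sin (th/2) : ℂ))) := by
  simp only [Complex.star_def, _root_.map_mul, Complex.conj_conj, Complex.conj_ofReal]
  ring

end Main

section Final
variable {A B : Type*} [Fintype A] [DecidableEq A] [Fintype B] [DecidableEq B]

lemma trFst_add (X Y : Matrix (A × B) (A × B) ℂ) : trFst (X + Y) = trFst X + trFst Y := by
  ext i j
  simp [trFst, Finset.sum_add_distrib]

theorem stmt11' (a0 a1 : A × B → ℂ) (h0 : star a0 ⬝ᵥ a0 = 1) (h1 : star a1 ⬝ᵥ a1 = 1)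
    (th om ph ph' : ℝ) :
    pguess (trFst (outerP (supvec a0 a1 th ph))) (trFst (outerP (supvec a0 a1 om ph')))
      ≤ (1/2) * (‖(((Real.sin th : ℂ) * Complex.exp (-(Complex.I * ph))
              - (Real.sin om : ℂ) * Complex.exp (-(Complex.I * ph'))) / 2)‖
            * Real.sqrt (1 - (2 * pguess (trSnd (outerP a0)) (trSnd (outerP a1)) - 1)^2)
          + |(Real.cos th - Real.cos om) / 2|
            * (2 * pguess (trFst (outerP a0)) (trFst (outerP a1)) - 1)
          + 1) := by
  set x1 : ℂ := ((Real.cos (th/2) : ℝ) : ℂ) with hx1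
  set y1 : ℂ := Complex.exp (Complex.I * ph) * ((Real.sin (th/2) : ℝ) : ℂ) with hy1
  set x2 : ℂ := ((Real.cos (om/2) : ℝ) : ℂ) with hx2
  set y2 : ℂ := Complex.exp (Complex.I * ph') * ((Real.sin (om/2) : ℝ) : ℂ) with hy2
  set z1 : ℂ := ((Real.sin th : ℂ) * Complex.exp (-(Complex.I * ph))
      - (Real.sin om : ℂ) * Complex.exp (-(Complex.I * ph'))) / 2 with hz1
  set z2 : ℝ := (Real.cos th - Real.cos om) / 2 with hz2
  -- coefficient identities
  have c00 : x1 * star x1 - x2 * star x2 = ((z2 : ℝ) : ℂ) := by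
    rw [hx1, hx2, xsx th, xsx om, ← Complex.ofReal_sub, hz2]
    congr 1
    ring
  have c01 : x1 * star y1 - x2 * star y2 = z1 := by
    rw [hx1, hy1, hx2, hy2, xsy th ph, xsy om ph', hz1]
    ring
  have c10 : y1 * star x1 - y2 * star x2 = starRingEnd ℂ z1 := by
    rw [hy1, hx1, hy2, hx2, ysx th ph, ysx om ph', ← map_sub]
    rw [show ((Real.cos (th/2) : ℝ) : ℂ) * star (Complex.exp (Complex.I * ph)
          * ((Real.sin (th/2) : ℝ) : ℂ))
        - ((Real.cos (om/2) : ℝ) : ℂ) * star (Complex.exp (Complex.I * ph')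
          * ((Real.sin (om/2) : ℝ) : ℂ)) = z1 from c01]
  have c11 : y1 * star y1 - y2 * star y2 = -((z2 : ℝ) : ℂ) := by
    rw [hy1, hy2, ysy th ph, ysy om ph', ← Complex.ofReal_sub, hz2]
    rw [show ((1 - Real.cos th)/2 - (1 - Real.cos om)/2 : ℝ)
      = -((Real.cos th - Real.cos om)/2) by ring]
    push_cast
    ring
  -- matrix difference identity
  have hdiff : outerP (supvec a0 a1 th ph) - outerP (supvec a0 a1 om ph')
      = ((z2 : ℝ) : ℂ) • crossP a0 a0 + z1 • crossP a0 a1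
        + (starRingEnd ℂ z1) • crossP a1 a0 + (-((z2 : ℝ) : ℂ)) • crossP a1 a1 := by
    rw [show supvec a0 a1 th ph = x1 • a0 + y1 • a1 from rfl,
      show supvec a0 a1 om ph' = x2 • a0 + y2 • a1 from rfl, outer_comb_sub,
      c00, c01, c10, c11]
  have hregroup : trFst (outerP (supvec a0 a1 th ph) - outerP (supvec a0 a1 om ph'))
      = ((z2 : ℝ) : ℂ) • (trFst (crossP a0 a0) - trFst (crossP a1 a1))
        + z1 • trFst (crossP a0 a1) + (starRingEnd ℂ z1) • trFst (crossP a1 a0) := by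
    rw [hdiff, trFst_add, trFst_add, trFst_add, trFst_smul, trFst_smul, trFst_smul,
      trFst_smul, smul_sub, neg_smul]
    abel
  -- trace norm bound
  have hM10 : traceNorm (trFst (crossP a1 a0)) = traceNorm (trFst (crossP a0 a1)) := by
    rw [show trFst (crossP a1 a0) = (trFst (crossP a0 a1))ᴴ by
      rw [← trFst_conjT, crossP_conjT], traceNorm_conjTranspose]
  set K : ℝ := traceNorm (trFst (crossP a0 a1)) with hKdef
  set T0 : ℝ := traceNorm (trFst (crossP a0 a0) - trFst (crossP a1 a1)) with hT0
  have hb : traceNorm (trFst (outerP (supvec a0 a1 th ph) - outerP (supvec a0 a1 om ph')))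
      ≤ |z2| * T0 + ‖z1‖ * K + ‖z1‖ * K := by
    rw [hregroup]
    calc traceNorm (((z2 : ℝ) : ℂ) • (trFst (crossP a0 a0) - trFst (crossP a1 a1))
            + z1 • trFst (crossP a0 a1) + (starRingEnd ℂ z1) • trFst (crossP a1 a0))
        ≤ traceNorm (((z2 : ℝ) : ℂ) • (trFst (crossP a0 a0) - trFst (crossP a1 a1))
            + z1 • trFst (crossP a0 a1))
          + traceNorm ((starRingEnd ℂ z1) • trFst (crossP a1 a0)) :=
          traceNorm_triangle _ _
      _ ≤ traceNorm (((z2 : ℝ) : ℂ) • (trFst (crossP a0 a0) - trFst (crossP a1 a1)))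
          + traceNorm (z1 • trFst (crossP a0 a1))
          + traceNorm ((starRingEnd ℂ z1) • trFst (crossP a1 a0)) := by
          have := traceNorm_triangle (((z2 : ℝ) : ℂ) • (trFst (crossP a0 a0)
            - trFst (crossP a1 a1))) (z1 • trFst (crossP a0 a1))
          linarith
      _ = |z2| * T0 + ‖z1‖ * K + ‖z1‖ * K := by
          rw [traceNorm_smul, traceNorm_smul, traceNorm_smul, Complex.norm_real, Real.norm_eq_abs,
            Complex.norm_conj, hM10]
  -- chain bound
  have hK : K ≤ Real.sqrt (1
      - (traceNorm (trSnd (outerP a0) - trSnd (outerP a1)) / 2)^2) :=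
    offdiag_chain a0 a1 h0 h1
  -- rewrite pguess
  have hps : 2 * pguess (trSnd (outerP a0)) (trSnd (outerP a1)) - 1
      = traceNorm (trSnd (outerP a0) - trSnd (outerP a1)) / 2 := by
    rw [pguess]
    ring
  have hpf : 2 * pguess (trFst (outerP a0)) (trFst (outerP a1)) - 1 = T0 / 2 := by
    rw [pguess, outerP_eq_crossP a0, outerP_eq_crossP a1, hT0]
    ring
  have hgoal : pguess (trFst (outerP (supvec a0 a1 th ph)))
        (trFst (outerP (supvec a0 a1 om ph')))
      = 1/2 + traceNorm (trFst (outerP (supvec a0 a1 th ph)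
          - outerP (supvec a0 a1 om ph'))) / 4 := by
    rw [pguess, trFst_sub]
  rw [hgoal, hps, hpf, hz2]
  have hz1K : ‖z1‖ * K ≤ ‖z1‖ * Real.sqrt (1
      - (traceNorm (trSnd (outerP a0) - trSnd (outerP a1)) / 2)^2) :=
    mul_le_mul_of_nonneg_left hK (norm_nonneg z1)
  have habs2 : |(Real.cos th - Real.cos om) / 2| = |z2| := by rw [hz2]
  rw [habs2]
  linarith

end Final

theorem stmt11 {A B : Type*} [Fintype A] [DecidableEq A] [Fintype B] [DecidableEq B]
    (a0 a1 : A × B → ℂ) (h0 : star a0 ⬝ᵥ a0 = 1) (h1 : star a1 ⬝ᵥ a1 = 1)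
    (th om ph ph' : ℝ) :
    pguess (trFst (outerP (supvec a0 a1 th ph))) (trFst (outerP (supvec a0 a1 om ph')))
      ≤ (1/2) * (‖(((Real.sin th : ℂ) * Complex.exp (-(Complex.I * ph))
              - (Real.sin om : ℂ) * Complex.exp (-(Complex.I * ph'))) / 2)‖
            * Real.sqrt (1 - (2 * pguess (trSnd (outerP a0)) (trSnd (outerP a1)) - 1)^2)
          + |(Real.cos th - Real.cos om) / 2|
            * (2 * pguess (trFst (outerP a0)) (trFst (outerP a1)) - 1)
          + 1) :=
  stmt11' a0 a1 h0 h1 th om ph ph'
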